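/- arXiv:2407.09072 — 8 statements merged into one kernel-verified Lean document; each statement's English description precedes it below -/
import Mathlib

section
/- (Proposition 2, IPO satisfies the weak interpolation criteria.) Let Y be a finite type with at least two elements, let π_ref and π* be full-support policies on Y, and suppose π* has a unique maximizer y*. Define the IPO reward r_IPO(y) = ∑_{y'∈Y} π_ref(y')·π*(y)/(π*(y) + π*(y')), and for each λ > 0 let π_λ(y) = π_ref(y)·exp(r_IPO(y)/λ)/Z(λ), Z(λ) = ∑_{y'} π_ref(y')·exp(r_IPO(y')/λ), be the Gibbs policy for r_IPO (the unconstrained minimizer of the IPO objective). Then π_λ converges pointwise to the point mass at y* as λ → 0⁺, and converges pointwise to π_ref as λ → ∞. -/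
open Filter

/-- Proposition 2 (IPO satisfies the weak interpolation criteria).  With the IPO reward
`r_IPO y = ∑ y', πref y' * (π* y / (π* y + π* y'))`, the Gibbs policy
`πλ y = πref y * exp (r_IPO y / λ) / Z(λ)` (the unconstrained minimizer of the IPO
objective) converges pointwise to the point mass at the unique maximizer `ystar` of `π*`
as `λ → 0⁺`, and to `πref` as `λ → ∞`. -/
theorem ipo_weak_interpolation
    {Y : Type*} [Fintype Y] (hY : 1 < Fintype.card Y)
    (πref : Y → ℝ) (hrefPos : ∀ y, 0 < πref y) (hrefSum : ∑ y, πref y = 1)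
    (πstar : Y → ℝ) (hstarPos : ∀ y, 0 < πstar y) (hstarSum : ∑ y, πstar y = 1)
    (ystar : Y) (hmax : ∀ y, y ≠ ystar → πstar y < πstar ystar)
    (rIPO : Y → ℝ)
    (hr : ∀ y, rIPO y = ∑ y', πref y' * (πstar y / (πstar y + πstar y')))
    (πgibbs : ℝ → Y → ℝ)
    (hgibbs : ∀ lam : ℝ, 0 < lam → ∀ y,
      πgibbs lam y = πref y * Real.exp (rIPO y / lam) /
        ∑ y', πref y' * Real.exp (rIPO y' / lam)) :
    (Tendsto (fun lam => πgibbs lam ystar) (nhdsWithin 0 (Set.Ioi 0)) (nhds 1) ∧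
      ∀ y, y ≠ ystar →
        Tendsto (fun lam => πgibbs lam y) (nhdsWithin 0 (Set.Ioi 0)) (nhds 0)) ∧
    ∀ y, Tendsto (fun lam => πgibbs lam y) atTop (nhds (πref y)) := by
  classical
  have hne : Nonempty Y := Fintype.card_pos_iff.mp (by omega)
  -- strict reward gap
  have hgap : ∀ y, y ≠ ystar → rIPO y < rIPO ystar := by
    intro y hy
    rw [hr y, hr ystar]
    refine Finset.sum_lt_sum_of_nonempty Finset.univ_nonempty ?_
    intro i _
    refine mul_lt_mul_of_pos_left ?_ (hrefPos i)
    have h1 := hmax y hy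
    rw [div_lt_div_iff₀ (add_pos (hstarPos y) (hstarPos i)) (add_pos (hstarPos ystar) (hstarPos i))]
    nlinarith [hstarPos i, hstarPos y, hstarPos ystar]
  set M := rIPO ystar with hM
  -- rewrite of the Gibbs policy with shifted reward
  have key : ∀ lam : ℝ, 0 < lam → ∀ y,
      πgibbs lam y = πref y * Real.exp ((rIPO y - M) / lam) /
        ∑ y', πref y' * Real.exp ((rIPO y' - M) / lam) := by
    intro lam hlam y
    rw [hgibbs lam hlam y]
    have hE : ∀ z : Y, Real.exp (rIPO z / lam)
        = Real.exp ((rIPO z - M) / lam) * Real.exp (M / lam) := by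
      intro z; rw [← Real.exp_add]; congr 1; field_simp; ring
    rw [hE y, Finset.sum_congr rfl (fun z _ => by rw [hE z, ← mul_assoc]),
      ← Finset.sum_mul, ← mul_assoc,
      mul_div_mul_right _ _ (Real.exp_ne_zero (M / lam))]
  -- λ → 0⁺ : each shifted term converges
  have hterm0 : ∀ z : Y,
      Tendsto (fun lam => πref z * Real.exp ((rIPO z - M) / lam))
        (nhdsWithin 0 (Set.Ioi 0)) (nhds (if z = ystar then πref ystar else 0)) := by
    intro z
    by_cases hz : z = ystar
    · subst hz
      simp only [if_pos rfl, sub_self, zero_div, Real.exp_zero, mul_one]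
      simp only [hM, sub_self, zero_div, Real.exp_zero, mul_one, ↓reduceIte]
      exact tendsto_const_nhds
    · simp only [if_neg hz]
      have hc : rIPO z - M < 0 := sub_neg.mpr (hgap z hz)
      have h1 : Tendsto (fun lam : ℝ => (rIPO z - M) / lam)
          (nhdsWithin 0 (Set.Ioi 0)) atBot := by
        have := tendsto_inv_nhdsGT_zero.const_mul_atTop_of_neg (r := rIPO z - M) hc
        simpa [div_eq_mul_inv] using this
      have h2 : Tendsto (fun lam : ℝ => Real.exp ((rIPO z - M) / lam))
          (nhdsWithin 0 (Set.Ioi 0)) (nhds 0) :=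
        Real.tendsto_exp_atBot.comp h1
      simpa using (h2.const_mul (πref z))
  have hS0 : Tendsto (fun lam => ∑ y', πref y' * Real.exp ((rIPO y' - M) / lam))
      (nhdsWithin 0 (Set.Ioi 0)) (nhds (πref ystar)) := by
    have := tendsto_finset_sum Finset.univ (fun z _ => hterm0 z)
    simpa [Finset.sum_ite_eq' Finset.univ ystar] using this
  have heq0 : ∀ y : Y, (fun lam => πref y * Real.exp ((rIPO y - M) / lam) /
        ∑ y', πref y' * Real.exp ((rIPO y' - M) / lam)) =ᶠ[nhdsWithin 0 (Set.Ioi 0)]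
        (fun lam => πgibbs lam y) := by
    intro y
    filter_upwards [self_mem_nhdsWithin] with lam hlam
    exact (key lam hlam y).symm
  constructor
  · constructor
    · have h := (hterm0 ystar).div hS0 (ne_of_gt (hrefPos ystar))
      refine Tendsto.congr' (heq0 ystar) ?_
      simpa [div_self (ne_of_gt (hrefPos ystar)), Pi.div_def] using h
    · intro y hy
      have h := (hterm0 y).div hS0 (ne_of_gt (hrefPos ystar))
      refine Tendsto.congr' (heq0 y) ?_
      simpa [if_neg hy, Pi.div_def] using h
  · -- λ → ∞
    intro y
    have htermT : ∀ z : Y,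
        Tendsto (fun lam => πref z * Real.exp (rIPO z / lam)) atTop (nhds (πref z)) := by
      intro z
      have h1 : Tendsto (fun lam : ℝ => rIPO z / lam) atTop (nhds 0) :=
        tendsto_const_nhds.div_atTop tendsto_id
      have h2 : Tendsto (fun lam : ℝ => Real.exp (rIPO z / lam)) atTop (nhds 1) := by
        simpa [Function.comp_def] using (Real.continuous_exp.tendsto 0).comp h1
      simpa using h2.const_mul (πref z)
    have hST : Tendsto (fun lam => ∑ y', πref y' * Real.exp (rIPO y' / lam))
        atTop (nhds 1) := by
      have := tendsto_finset_sum Finset.univ (fun z _ => htermT z)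
      simpa [hrefSum] using this
    have h := (htermT y).div hST one_ne_zero
    refine Tendsto.congr' ?_ (by simpa using h)
    filter_upwards [eventually_gt_atTop (0:ℝ)] with lam hlam
    exact (hgibbs lam hlam y).symm
end

section
/- Let Y = {y₁, y₂}. For every full-support policy q on Y and every B ∈ ℝ, there is a unique full-support policy π_{B,q} on Y satisfying log(π(y₁)/q(y₁)) − log(π(y₂)/q(y₂)) = B, namely π_{B,q}(y₁) = q(y₁)·exp(B)/(q(y₁)·exp(B) + q(y₂)). Moreover: (i) if q and q' are full-support policies on Y with q(y₁)/q(y₂) ≠ q'(y₁)/q'(y₂), then π_{B,q} ≠ π_{B,q'} for every B ∈ ℝ; and (ii) for any sequence Bₙ → +∞, π_{Bₙ,q}(y₁) → 1 (the point mass at y₁). -/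
open Filter

/-- On the two-element response space `Fin 2` (with `0 = y₁`, `1 = y₂`), the unique
full-support policy with log-ratio offset `B` from a full-support policy `q`:
`π_{B,q} y₁ = q y₁ * exp B / (q y₁ * exp B + q y₂)`. -/
noncomputable def piB (q : Fin 2 → ℝ) (B : ℝ) : Fin 2 → ℝ :=
  fun i => if i = 0 then q 0 * Real.exp B / (q 0 * Real.exp B + q 1)
           else q 1 / (q 0 * Real.exp B + q 1)

lemma piB_denom_pos (q : Fin 2 → ℝ) (hq : ∀ i, 0 < q i) (B : ℝ) :
    0 < q 0 * Real.exp B + q 1 :=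
  add_pos (mul_pos (hq 0) (Real.exp_pos B)) (hq 1)

/-- For every full-support policy `q` on `{y₁, y₂}` and every `B ∈ ℝ`, `π_{B,q}` is the
unique full-support policy satisfying
`log (π y₁ / q y₁) − log (π y₂ / q y₂) = B`.  Moreover (i) if `q y₁ / q y₂ ≠ q' y₁ / q' y₂`
then `π_{B,q} ≠ π_{B,q'}` for every `B`, and (ii) for any sequence `Bₙ → +∞`,
`π_{Bₙ,q} y₁ → 1` (the point mass at `y₁`). -/
theorem log_ratio_offset_policy_unique_and_limits
    (q : Fin 2 → ℝ) (hq : ∀ i, 0 < q i) (hqsum : q 0 + q 1 = 1) :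
    (∀ B : ℝ,
      (∀ i, 0 < piB q B i) ∧ piB q B 0 + piB q B 1 = 1 ∧
      Real.log (piB q B 0 / q 0) - Real.log (piB q B 1 / q 1) = B ∧
      ∀ π : Fin 2 → ℝ, (∀ i, 0 < π i) → π 0 + π 1 = 1 →
        Real.log (π 0 / q 0) - Real.log (π 1 / q 1) = B → π = piB q B) ∧
    (∀ q' : Fin 2 → ℝ, (∀ i, 0 < q' i) → q' 0 + q' 1 = 1 →
      q 0 / q 1 ≠ q' 0 / q' 1 → ∀ B : ℝ, piB q B ≠ piB q' B) ∧
    (∀ Bseq : ℕ → ℝ, Tendsto Bseq atTop atTop →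
      Tendsto (fun n => piB q (Bseq n) 0) atTop (nhds 1)) := by
  have hpos : ∀ B : ℝ, ∀ i, 0 < piB q B i := by
    intro B i
    have hD := piB_denom_pos q hq B
    fin_cases i <;> simp [piB]
    · exact div_pos (mul_pos (hq 0) (Real.exp_pos B)) hD
    · exact div_pos (hq 1) hD
  have hsum : ∀ B : ℝ, piB q B 0 + piB q B 1 = 1 := by
    intro B
    have hD := (piB_denom_pos q hq B).ne'
    simp only [piB]
    norm_num
    field_simp
  have hlog : ∀ B : ℝ, Real.log (piB q B 0 / q 0) - Real.log (piB q B 1 / q 1) = B := by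
    intro B
    have hD := (piB_denom_pos q hq B).ne'
    have h0 := (hq 0).ne'
    have h1 := (hq 1).ne'
    simp only [piB]
    norm_num
    rw [show q 0 * Real.exp B / (q 0 * Real.exp B + q 1) / q 0
        = Real.exp B / (q 0 * Real.exp B + q 1) by field_simp,
      show q 1 / (q 0 * Real.exp B + q 1) / q 1 = 1 / (q 0 * Real.exp B + q 1) by
        field_simp]
    rw [Real.log_div (Real.exp_pos B).ne' hD, Real.log_div one_ne_zero hD,
      Real.log_exp, Real.log_one]
    ring
  refine ⟨fun B => ⟨hpos B, hsum B, hlog B, ?_⟩, ?_, ?_⟩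
  · intro π hπ hπsum hπlog
    have hD := piB_denom_pos q hq B
    have hratio : π 0 / q 0 = Real.exp B * (π 1 / q 1) := by
      have h1 : Real.log (π 0 / q 0) = B + Real.log (π 1 / q 1) := by linarith
      have := congrArg Real.exp h1
      rw [Real.exp_log (div_pos (hπ 0) (hq 0)), Real.exp_add,
        Real.exp_log (div_pos (hπ 1) (hq 1))] at this
      exact this
    have h0' : π 0 * q 1 = Real.exp B * π 1 * q 0 := by
      have h := hratio
      rw [div_eq_iff (hq 0).ne'] at h
      rw [h]
      rw [show Real.exp B * (π 1 / q 1) * q 0 * q 1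
          = Real.exp B * π 1 * q 0 * (q 1 / q 1) by ring, div_self (hq 1).ne', mul_one]
    have hπ1m : π 1 * (q 0 * Real.exp B + q 1) = q 1 := by
      linear_combination (-1 : ℝ) * h0' + q 1 * hπsum
    have hπ1 : π 1 = q 1 / (q 0 * Real.exp B + q 1) := by
      rw [eq_div_iff hD.ne']; exact hπ1m
    have hπ0 : π 0 = q 0 * Real.exp B / (q 0 * Real.exp B + q 1) := by
      rw [eq_div_iff hD.ne']
      linear_combination (q 0 * Real.exp B + q 1) * hπsum - hπ1m
    funext i
    fin_cases i <;> simp [piB, hπ0, hπ1]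
  · intro q' hq' hq'sum hne B heq
    apply hne
    have hD := (piB_denom_pos q hq B).ne'
    have hD' := (piB_denom_pos q' hq' B).ne'
    have h0 := congrFun heq 0
    simp only [piB] at h0
    norm_num at h0
    rw [div_eq_div_iff (piB_denom_pos q hq B).ne' (piB_denom_pos q' hq' B).ne'] at h0
    have key : Real.exp B * (q 0 * q' 1) = Real.exp B * (q' 0 * q 1) := by
      linear_combination h0
    have key2 := mul_left_cancel₀ (Real.exp_pos B).ne' key
    rw [div_eq_div_iff (hq 1).ne' (hq' 1).ne']
    linarith
  · intro Bseq hB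
    have hDtop : Tendsto (fun n => q 0 * Real.exp (Bseq n) + q 1) atTop atTop := by
      apply tendsto_atTop_add_const_right
      exact Tendsto.const_mul_atTop (hq 0) (Real.tendsto_exp_atTop.comp hB)
    have h2 : Tendsto (fun n => q 1 / (q 0 * Real.exp (Bseq n) + q 1)) atTop (nhds 0) :=
      Tendsto.div_atTop tendsto_const_nhds hDtop
    have heq : ∀ n, piB q (Bseq n) 0 = 1 - q 1 / (q 0 * Real.exp (Bseq n) + q 1) := by
      intro n
      have := hsum (Bseq n)
      simp only [piB] at this ⊢
      norm_num at this ⊢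
      linarith
    simp only [heq]
    have := (tendsto_const_nhds (x := (1:ℝ)) (f := atTop)).sub h2
    simpa using this
end

section
/- Let p ∈ (0,1) and let π be a policy on Y = {y₁, y₂} with π(y₁) > 0, π(y₂) > 0, and π(y₁) + π(y₂) = 1. With σ the logistic function, p·(−log σ(log π(y₁) − log π(y₂))) + (1−p)·(−log σ(log π(y₂) − log π(y₁))) = KL_b(p ‖ π(y₁)) + H_b(p), where KL_b(p ‖ q) = p·log(p/q) + (1−p)·log((1−p)/(1−q)) and H_b(p) = −p·log p − (1−p)·log(1−p). In particular, the population DPO loss with λ = 1 and uniform reference policy over two responses equals the reverse KL divergence KL(π* ‖ π) plus a constant independent of π, where π* is the policy with π*(y₁) = p. -/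
/-- The logistic (sigmoid) function `σ(x) = 1 / (1 + exp (−x))`. -/
noncomputable def logistic (x : ℝ) : ℝ := 1 / (1 + Real.exp (-x))

/-- Binary KL divergence `KL_b(p ‖ q) = p log (p/q) + (1−p) log ((1−p)/(1−q))`. -/
noncomputable def KLb (p q : ℝ) : ℝ :=
  p * Real.log (p / q) + (1 - p) * Real.log ((1 - p) / (1 - q))

/-- Binary entropy `H_b(p) = −p log p − (1−p) log (1−p)`. -/
noncomputable def Hb (p : ℝ) : ℝ :=
  -(p * Real.log p) - (1 - p) * Real.log (1 - p)


/-!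
Writing `σ(log a − log b) = a / (a + b)`, the two logistic terms of the loss collapse to
`π y₁` and `π y₂` because `π` sums to one, so the loss is the cross entropy
`−p log π(y₁) − (1 − p) log π(y₂)`, which splits as `KL_b(p ‖ π y₁) + H_b(p)`.
-/

section

open Real

theorem logistic_log_sub_log {a b : ℝ} (ha : 0 < a) (hb : 0 < b) :
    logistic (log a - log b) = a / (a + b) := by
  rw [logistic, neg_sub, ← log_div hb.ne' ha.ne', exp_log (div_pos hb ha)]
  field_simp

theorem mul_log_div_eq_sub (p : ℝ) {q : ℝ} (hq : q ≠ 0) :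
    p * log (p / q) = p * log p - p * log q := by
  rcases eq_or_ne p 0 with rfl | hp
  · simp
  · rw [log_div hp hq, mul_sub]

theorem KLb_add_Hb {q : ℝ} (hq₀ : q ≠ 0) (hq₁ : 1 - q ≠ 0) (p : ℝ) :
    KLb p q + Hb p = -(p * log q) - (1 - p) * log (1 - q) := by
  rw [KLb, Hb, mul_log_div_eq_sub p hq₀, mul_log_div_eq_sub (1 - p) hq₁]
  ring

end

theorem dpo_two_point_loss_eq_reverse_kl_general
    (p : ℝ)
    (π : Fin 2 → ℝ) (hπ0 : 0 < π 0) (hπ1 : 0 < π 1) (hπsum : π 0 + π 1 = 1) :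
    p * (-Real.log (logistic (Real.log (π 0) - Real.log (π 1)))) +
      (1 - p) * (-Real.log (logistic (Real.log (π 1) - Real.log (π 0)))) =
    KLb p (π 0) + Hb p ∧
    KLb p (π 0) + Hb p =
      (p * Real.log (p / π 0) + (1 - p) * Real.log ((1 - p) / π 1)) + Hb p := by
  have hπ1_eq : 1 - π 0 = π 1 := by linarith
  refine ⟨?_, by rw [KLb, hπ1_eq]⟩
  have hσ0 : logistic (Real.log (π 0) - Real.log (π 1)) = π 0 := by
    rw [logistic_log_sub_log hπ0 hπ1, hπsum, div_one]
  have hσ1 : logistic (Real.log (π 1) - Real.log (π 0)) = π 1 := by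
    rw [logistic_log_sub_log hπ1 hπ0, add_comm, hπsum, div_one]
  rw [hσ0, hσ1, KLb_add_Hb hπ0.ne' (hπ1_eq ▸ hπ1.ne'), hπ1_eq]
  ring

/-- For `p ∈ (0,1)` and a full-support policy `π` on `{y₁, y₂}`, the per-pair population
DPO loss with `λ = 1` and uniform reference policy equals `KL_b(p ‖ π y₁) + H_b p`,
i.e. the reverse KL divergence `KL(π* ‖ π)` (with `π* y₁ = p`) plus a constant
independent of `π`. -/
theorem dpo_two_point_loss_eq_reverse_kl
    (p : ℝ) (hp : p ∈ Set.Ioo (0 : ℝ) 1)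
    (π : Fin 2 → ℝ) (hπ0 : 0 < π 0) (hπ1 : 0 < π 1) (hπsum : π 0 + π 1 = 1) :
    p * (-Real.log (logistic (Real.log (π 0) - Real.log (π 1)))) +
      (1 - p) * (-Real.log (logistic (Real.log (π 1) - Real.log (π 0)))) =
    KLb p (π 0) + Hb p ∧
    KLb p (π 0) + Hb p =
      (p * Real.log (p / π 0) + (1 - p) * Real.log ((1 - p) / π 1)) + Hb p :=
  dpo_two_point_loss_eq_reverse_kl_general p π hπ0 hπ1 hπsum
end

section
/- (Proposition 4, TYPO satisfies the strong interpolation criteria.) Let Y be a finite type with at least two elements, and let π_ref and π* be full-support policies on Y. Define the TYPO objective L_λ(π) = L_sup(π) + λ·L_unsup(π) over full-support policies π, where L_sup(π) = ∑_{y₁≠y₂} w(y₁,y₂)·KL_b(π*(y₁)/(π*(y₁)+π*(y₂)) ‖ π(y₁)/(π(y₁)+π(y₂))) with all weights w(y₁,y₂) > 0, and L_unsup(π) = ∑_y π_ref(y)·log(π_ref(y)/π(y)). Then for each λ > 0 a minimizer of L_λ over full-support policies exists, and any family of minimizers π̂_λ converges pointwise to the BT-optimal policy π* as λ → 0⁺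 and converges pointwise to π_ref as λ → ∞. -/
open Filter

lemma sub_le_mul_log_div {a b : ℝ} (ha : 0 < a) (hb : 0 < b) :
    a - b ≤ a * Real.log (a / b) := by
  have h := Real.log_le_sub_one_of_pos (show 0 < b / a by positivity)
  have h2 : Real.log (a / b) = - Real.log (b / a) := by
    rw [← Real.log_inv]; congr 1; field_simp
  rw [h2]
  have h3 : b / a * a = b := div_mul_cancel₀ b (ne_of_gt ha)
  nlinarith

lemma klb_nonneg {p q : ℝ} (hp : p ∈ Set.Ioo (0:ℝ) 1) (hq : q ∈ Set.Ioo (0:ℝ) 1) :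
    0 ≤ KLb p q := by
  have h1 := sub_le_mul_log_div hp.1 hq.1
  have h2 := sub_le_mul_log_div (by linarith [hp.2] : (0:ℝ) < 1 - p)
    (by linarith [hq.2] : (0:ℝ) < 1 - q)
  unfold KLb; linarith

lemma klb_self {q : ℝ} (hq : q ≠ 0) (hq1 : (1:ℝ) - q ≠ 0) : KLb q q = 0 := by
  unfold KLb
  rw [div_self hq, div_self hq1, Real.log_one]
  ring

lemma ratio_mem {a b : ℝ} (ha : 0 < a) (hb : 0 < b) : a / (a + b) ∈ Set.Ioo (0:ℝ) 1 := by
  constructor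
  · positivity
  · rw [div_lt_one (by linarith)]; linarith

lemma kl_sum_nonneg {Y : Type*} (s : Finset Y) (a b : Y → ℝ)
    (ha : ∀ z ∈ s, 0 < a z) (hb : ∀ z ∈ s, 0 < b z)
    (hs : ∑ z ∈ s, a z = ∑ z ∈ s, b z) :
    0 ≤ ∑ z ∈ s, a z * Real.log (a z / b z) := by
  have h : ∑ z ∈ s, (a z - b z) ≤ ∑ z ∈ s, a z * Real.log (a z / b z) :=
    Finset.sum_le_sum fun z hz => sub_le_mul_log_div (ha z hz) (hb z hz)
  rw [Finset.sum_sub_distrib, hs] at h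
  linarith

section pinsker
variable {p : ℝ}

noncomputable def gP (p : ℝ) : ℝ → ℝ := fun x =>
  p * (Real.log p - Real.log x) + (1 - p) * (Real.log (1 - p) - Real.log (1 - x))
    - 2 * (p - x)^2

lemma gP_hasDeriv (hp : p ∈ Set.Ioo (0:ℝ) 1) {x : ℝ} (hx : x ∈ Set.Ioo (0:ℝ) 1) :
    HasDerivAt (gP p) ((x - p) * (1 / (x * (1 - x)) - 4)) x := by
  have hx0 : x ≠ 0 := ne_of_gt hx.1
  have hx1 : (1:ℝ) - x ≠ 0 := by have := hx.2; intro h; linarith [h]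
  have h1 : HasDerivAt (fun x => Real.log x) x⁻¹ x := Real.hasDerivAt_log hx0
  have hi : HasDerivAt (fun x : ℝ => 1 - x) (-1) x := (hasDerivAt_id x).const_sub 1
  have h2 : HasDerivAt (fun x : ℝ => Real.log (1 - x)) ((1 - x)⁻¹ * (-1)) x :=
    (Real.hasDerivAt_log hx1).comp x hi
  have h3 : HasDerivAt (fun x : ℝ => p * (Real.log p - Real.log x)) (p * (0 - x⁻¹)) x :=
    ((hasDerivAt_const x (Real.log p)).sub h1).const_mul p
  have h4 : HasDerivAt (fun x : ℝ => (1 - p) * (Real.log (1 - p) - Real.log (1 - x)))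
      ((1 - p) * (0 - (1 - x)⁻¹ * (-1))) x :=
    ((hasDerivAt_const x (Real.log (1 - p))).sub h2).const_mul (1 - p)
  have h5 : HasDerivAt (fun x : ℝ => 2 * (p - x)^2)
      (2 * (2 * (p - x) ^ 1 * (-1))) x := by
    exact (((hasDerivAt_id x).const_sub p).pow 2).const_mul 2
  have := (h3.add h4).sub h5
  refine HasDerivAt.congr_deriv this ?_
  field_simp
  ring

lemma klb_pinsker {p q : ℝ} (hp : p ∈ Set.Ioo (0:ℝ) 1) (hq : q ∈ Set.Ioo (0:ℝ) 1) :
    2 * (p - q)^2 ≤ KLb p q := by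
  have hsub : ∀ a b : ℝ, a ∈ Set.Ioo (0:ℝ) 1 → b ∈ Set.Ioo (0:ℝ) 1 →
      Set.Icc a b ⊆ Set.Ioo (0:ℝ) 1 := by
    intro a b hA hB x hx
    exact ⟨lt_of_lt_of_le hA.1 hx.1, lt_of_le_of_lt hx.2 hB.2⟩
  have hgp : gP p p = 0 := by simp [gP]
  have hgq : 0 ≤ gP p q := by
    rcases le_total p q with hle | hle
    · have hmono : MonotoneOn (gP p) (Set.Icc p q) := by
        apply monotoneOn_of_deriv_nonneg (convex_Icc p q)
        · intro x hx
          exact (gP_hasDeriv hp (hsub p q hp hq hx)).continuousAt.continuousWithinAt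
        · intro x hx
          rw [interior_Icc] at hx
          exact ((gP_hasDeriv hp (hsub p q hp hq (Set.mem_Icc_of_Ioo hx))).differentiableAt).differentiableWithinAt
        · intro x hx
          rw [interior_Icc] at hx
          have hx' := hsub p q hp hq (Set.mem_Icc_of_Ioo hx)
          rw [(gP_hasDeriv hp hx').deriv]
          have h1 : 0 ≤ x - p := by linarith [hx.1]
          have h2 : 0 < x * (1 - x) := mul_pos hx'.1 (by linarith [hx'.2])
          have h3 : x * (1 - x) ≤ 1/4 := by nlinarith [sq_nonneg (2*x-1)]
          have h4 : (4:ℝ) ≤ 1 / (x * (1 - x)) := by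
            rw [le_div_iff₀ h2]; linarith
          nlinarith
      have := hmono (Set.left_mem_Icc.2 hle) (Set.right_mem_Icc.2 hle) hle
      linarith [this, hgp]
    · have hmono : AntitoneOn (gP p) (Set.Icc q p) := by
        apply antitoneOn_of_deriv_nonpos (convex_Icc q p)
        · intro x hx
          exact (gP_hasDeriv hp (hsub q p hq hp hx)).continuousAt.continuousWithinAt
        · intro x hx
          rw [interior_Icc] at hx
          exact ((gP_hasDeriv hp (hsub q p hq hp (Set.mem_Icc_of_Ioo hx))).differentiableAt).differentiableWithinAt
        · intro x hx
          rw [interior_Icc] at hx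
          have hx' := hsub q p hq hp (Set.mem_Icc_of_Ioo hx)
          rw [(gP_hasDeriv hp hx').deriv]
          have h1 : x - p ≤ 0 := by linarith [hx.2]
          have h2 : 0 < x * (1 - x) := mul_pos hx'.1 (by linarith [hx'.2])
          have h3 : x * (1 - x) ≤ 1/4 := by nlinarith [sq_nonneg (2*x-1)]
          have h4 : (4:ℝ) ≤ 1 / (x * (1 - x)) := by
            rw [le_div_iff₀ h2]; linarith
          nlinarith
      have := hmono (Set.left_mem_Icc.2 hle) (Set.right_mem_Icc.2 hle) hle
      linarith [this, hgp]
  have hkl : KLb p q = gP p q + 2 * (p - q)^2 := by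
    unfold KLb gP
    rw [Real.log_div (ne_of_gt hp.1) (ne_of_gt hq.1),
      Real.log_div (by linarith [hp.2] : (1:ℝ) - p ≠ 0) (by linarith [hq.2] : (1:ℝ) - q ≠ 0)]
    ring
  linarith [hgq, hkl]
end pinsker

lemma kl_group {Y : Type*} [Fintype Y] [DecidableEq Y] (hY : 1 < Fintype.card Y)
    (p q : Y → ℝ) (hp : ∀ z, 0 < p z) (hq : ∀ z, 0 < q z)
    (hps : ∑ z, p z = 1) (hqs : ∑ z, q z = 1) (y : Y) :
    KLb (p y) (q y) ≤ ∑ z, p z * Real.log (p z / q z) := by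
  classical
  set s : Finset Y := Finset.univ.erase y with hs
  have hsne : s.Nonempty := by
    obtain ⟨z, hz⟩ := Fintype.exists_ne_of_one_lt_card hY y
    exact ⟨z, Finset.mem_erase.2 ⟨hz, Finset.mem_univ z⟩⟩
  have hPsum : ∑ z ∈ s, p z = 1 - p y := by
    have := Finset.sum_erase_add Finset.univ p (Finset.mem_univ y)
    rw [hps] at this; linarith [this]
  have hQsum : ∑ z ∈ s, q z = 1 - q y := by
    have := Finset.sum_erase_add Finset.univ q (Finset.mem_univ y)
    rw [hqs] at this; linarith [this]
  have hP : 0 < 1 - p y := by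
    rw [← hPsum]; exact Finset.sum_pos (fun z _ => hp z) hsne
  have hQ : 0 < 1 - q y := by
    rw [← hQsum]; exact Finset.sum_pos (fun z _ => hq z) hsne
  set P := 1 - p y
  set Q := 1 - q y
  -- key: P log (P/Q) ≤ ∑ z in s, p z log (p z / q z)
  have key : P * Real.log (P / Q) ≤ ∑ z ∈ s, p z * Real.log (p z / q z) := by
    have h0 : 0 ≤ ∑ z ∈ s, p z * Real.log (p z / (q z * (P / Q))) := by
      apply kl_sum_nonneg s p (fun z => q z * (P / Q))
      · exact fun z _ => hp z
      · exact fun z _ => mul_pos (hq z) (div_pos hP hQ)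
      · rw [← Finset.sum_mul, hQsum, hPsum]
        field_simp
    have heq : ∀ z ∈ s, p z * Real.log (p z / (q z * (P / Q)))
        = p z * Real.log (p z / q z) - p z * Real.log (P / Q) := by
      intro z _
      have h1 : p z / (q z * (P / Q)) = (p z / q z) / (P / Q) := by
        rw [div_div]
      rw [h1, Real.log_div (ne_of_gt (div_pos (hp z) (hq z))) (ne_of_gt (div_pos hP hQ)), mul_sub]
    rw [Finset.sum_congr rfl heq, Finset.sum_sub_distrib, ← Finset.sum_mul, hPsum] at h0
    linarith
  have hsplit : ∑ z, p z * Real.log (p z / q z)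
      = p y * Real.log (p y / q y) + ∑ z ∈ s, p z * Real.log (p z / q z) := by
    rw [hs, ← Finset.sum_erase_add Finset.univ _ (Finset.mem_univ y)]
    ring
  unfold KLb
  rw [hsplit]
  linarith

/-- recover a policy from its pairwise ratios -/
lemma pol_identity {Y : Type*} [Fintype Y] [DecidableEq Y] (π : Y → ℝ)
    (hpos : ∀ z, 0 < π z) (hsum : ∑ z, π z = 1) (y : Y) :
    π y = (1 + ∑ z ∈ Finset.univ.erase y, ((π y / (π y + π z))⁻¹ - 1))⁻¹ := by
  have hy := hpos y
  have hterm : ∀ z ∈ Finset.univ.erase y, ((π y / (π y + π z))⁻¹ - 1) = π z / π y := by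
    intro z _
    have hz := hpos z
    rw [inv_div]
    field_simp
    ring
  rw [Finset.sum_congr rfl hterm, ← Finset.sum_div]
  have hPsum : ∑ z ∈ Finset.univ.erase y, π z = 1 - π y := by
    have := Finset.sum_erase_add Finset.univ π (Finset.mem_univ y)
    rw [hsum] at this; linarith
  rw [hPsum]
  field_simp
  ring



section lsup
variable {Y : Type*} [Fintype Y] [DecidableEq Y]
variable (πstar : Y → ℝ) (w : Y → Y → ℝ)
noncomputable def Lsup (πstar : Y → ℝ) (w : Y → Y → ℝ) (π : Y → ℝ) : ℝ :=
  ∑ y₁, ∑ y₂, if y₁ ≠ y₂ then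
      w y₁ y₂ * KLb (πstar y₁ / (πstar y₁ + πstar y₂)) (π y₁ / (π y₁ + π y₂))
    else 0


variable (hstarPos : ∀ y, 0 < πstar y) (hw : ∀ y₁ y₂, y₁ ≠ y₂ → 0 < w y₁ y₂)
include hstarPos hw
lemma lsup_term_nonneg (π : Y → ℝ) (hpos : ∀ z, 0 < π z) (y₁ y₂ : Y) :
    0 ≤ if y₁ ≠ y₂ then
      w y₁ y₂ * KLb (πstar y₁ / (πstar y₁ + πstar y₂)) (π y₁ / (π y₁ + π y₂))
    else 0 := by
  split_ifs with h
  · exact mul_nonneg (le_of_lt (hw y₁ y₂ h))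
      (klb_nonneg (ratio_mem (hstarPos y₁) (hstarPos y₂)) (ratio_mem (hpos y₁) (hpos y₂)))
  · exact le_refl 0

lemma lsup_nonneg (π : Y → ℝ) (hpos : ∀ z, 0 < π z) : 0 ≤ Lsup πstar w π :=
  Finset.sum_nonneg fun y₁ _ => Finset.sum_nonneg fun y₂ _ =>
    lsup_term_nonneg πstar w hstarPos hw π hpos y₁ y₂

lemma lsup_term_le (π : Y → ℝ) (hpos : ∀ z, 0 < π z) {y z : Y} (hyz : y ≠ z) :
    w y z * KLb (πstar y / (πstar y + πstar z)) (π y / (π y + π z)) ≤ Lsup πstar w π := by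
  have h1 : (if y ≠ z then
      w y z * KLb (πstar y / (πstar y + πstar z)) (π y / (π y + π z)) else 0)
      ≤ ∑ y₂, if y ≠ y₂ then
      w y y₂ * KLb (πstar y / (πstar y + πstar y₂)) (π y / (π y + π y₂)) else 0 :=
    Finset.single_le_sum (fun y₂ _ => lsup_term_nonneg πstar w hstarPos hw π hpos y y₂)
      (Finset.mem_univ z)
  have h2 : (∑ y₂, if y ≠ y₂ then
      w y y₂ * KLb (πstar y / (πstar y + πstar y₂)) (π y / (π y + π y₂)) else 0)
      ≤ Lsup πstar w π :=
    Finset.single_le_sum (fun y₁ _ => Finset.sum_nonneg fun y₂ _ =>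
      lsup_term_nonneg πstar w hstarPos hw π hpos y₁ y₂) (Finset.mem_univ y)
  rw [if_pos hyz] at h1
  exact h1.trans h2

omit hw in
lemma lsup_star_eq_zero : Lsup πstar w πstar = 0 := by
  unfold Lsup
  apply Finset.sum_eq_zero
  intro y₁ _
  apply Finset.sum_eq_zero
  intro y₂ _
  split_ifs with h
  · have hm := ratio_mem (hstarPos y₁) (hstarPos y₂)
    have h0 : πstar y₁ / (πstar y₁ + πstar y₂) ≠ 0 := ne_of_gt hm.1
    have h1 : (1:ℝ) - πstar y₁ / (πstar y₁ + πstar y₂) ≠ 0 := by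
      have := hm.2; intro hc; linarith
    unfold KLb
    rw [div_self h0, div_self h1, Real.log_one]
    ring
  · rfl

end lsup

lemma unsup_self_eq_zero {Y : Type*} [Fintype Y] (πref : Y → ℝ) :
    ∑ y, πref y * Real.log (πref y / πref y) = 0 := by
  apply Finset.sum_eq_zero
  intro y _
  rcases eq_or_ne (πref y) 0 with h | h
  · rw [h]; ring
  · rw [div_self h, Real.log_one]; ring

noncomputable def Fobj {Y : Type*} [Fintype Y] [DecidableEq Y]
    (πref πstar : Y → ℝ) (w : Y → Y → ℝ) (lam : ℝ) (π : Y → ℝ) : ℝ :=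
  Lsup πstar w π + lam * ∑ y, πref y * Real.log (πref y / π y)

lemma F_continuousOn {Y : Type*} [Fintype Y] [DecidableEq Y]
    (πref : Y → ℝ) (hrefPos : ∀ y, 0 < πref y)
    (πstar : Y → ℝ) (hstarPos : ∀ y, 0 < πstar y) (w : Y → Y → ℝ) (lam : ℝ) :
    ContinuousOn (Fobj πref πstar w lam) {π : Y → ℝ | ∀ z, 0 < π z} := by
  set S : Set (Y → ℝ) := {π : Y → ℝ | ∀ z, 0 < π z} with hS
  have happ : ∀ z : Y, ContinuousOn (fun π : Y → ℝ => π z) S :=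
    fun z => (continuous_apply z).continuousOn
  have hqmem : ∀ (y₁ y₂ : Y) (π : Y → ℝ), π ∈ S →
      π y₁ / (π y₁ + π y₂) ∈ Set.Ioo (0:ℝ) 1 :=
    fun y₁ y₂ π hπ => ratio_mem (hπ y₁) (hπ y₂)
  have hq : ∀ y₁ y₂ : Y, ContinuousOn (fun π : Y → ℝ => π y₁ / (π y₁ + π y₂)) S := by
    intro y₁ y₂
    exact (happ y₁).div ((happ y₁).add (happ y₂))
      (fun π hπ => ne_of_gt (add_pos (hπ y₁) (hπ y₂)))
  apply ContinuousOn.add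
  · unfold Lsup
    apply continuousOn_finset_sum
    intro y₁ _
    apply continuousOn_finset_sum
    intro y₂ _
    by_cases h : y₁ = y₂
    · simp only [h, ne_eq, not_true_eq_false, if_false]
      exact continuousOn_const
    · have h' : y₁ ≠ y₂ := h
      set c := πstar y₁ / (πstar y₁ + πstar y₂) with hc
      have hcm : c ∈ Set.Ioo (0:ℝ) 1 := ratio_mem (hstarPos y₁) (hstarPos y₂)
      have hmain : ContinuousOn (fun π : Y → ℝ =>
          w y₁ y₂ * (c * Real.log (c / (π y₁ / (π y₁ + π y₂)))
            + (1 - c) * Real.log ((1 - c) / (1 - π y₁ / (π y₁ + π y₂))))) S := by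
        apply continuousOn_const.mul
        apply ContinuousOn.add
        · apply continuousOn_const.mul
          apply ContinuousOn.log
          · exact continuousOn_const.div (hq y₁ y₂)
              (fun π hπ => ne_of_gt (hqmem y₁ y₂ π hπ).1)
          · intro π hπ
            exact ne_of_gt (div_pos hcm.1 (hqmem y₁ y₂ π hπ).1)
        · apply continuousOn_const.mul
          apply ContinuousOn.log
          · apply ContinuousOn.div continuousOn_const (continuousOn_const.sub (hq y₁ y₂))
            intro π hπ
            have := (hqmem y₁ y₂ π hπ).2
            intro hcon
            simp only [Pi.sub_apply, sub_eq_zero] at hcon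
            linarith
          · intro π hπ
            have h1 : 0 < 1 - c := by linarith [hcm.2]
            have h2 : 0 < 1 - π y₁ / (π y₁ + π y₂) := by linarith [(hqmem y₁ y₂ π hπ).2]
            exact ne_of_gt (div_pos h1 h2)
      exact ContinuousOn.congr hmain (fun π _ => if_pos h')
  · apply continuousOn_const.mul
    apply continuousOn_finset_sum
    intro z _
    apply continuousOn_const.mul
    apply ContinuousOn.log
    · exact continuousOn_const.div (happ z) (fun π hπ => ne_of_gt (hπ z))
    · intro π hπ
      exact ne_of_gt (div_pos (hrefPos z) (hπ z))

lemma pol_le_one {Y : Type*} [Fintype Y] [DecidableEq Y] (π : Y → ℝ)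
    (hpos : ∀ z, 0 < π z) (hsum : ∑ z, π z = 1) (y : Y) : π y ≤ 1 := by
  have h := Finset.sum_erase_add Finset.univ π (Finset.mem_univ y)
  have h2 : 0 ≤ ∑ z ∈ Finset.univ.erase y, π z :=
    Finset.sum_nonneg fun z _ => le_of_lt (hpos z)
  rw [hsum] at h
  linarith

lemma typo_exists_min {Y : Type*} [Fintype Y] [DecidableEq Y] (hY : 1 < Fintype.card Y)
    (πref : Y → ℝ) (hrefPos : ∀ y, 0 < πref y) (hrefSum : ∑ y, πref y = 1)
    (πstar : Y → ℝ) (hstarPos : ∀ y, 0 < πstar y)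
    (w : Y → Y → ℝ) (hw : ∀ y₁ y₂, y₁ ≠ y₂ → 0 < w y₁ y₂)
    (lam : ℝ) (hlam : 0 < lam) :
    ∃ π : Y → ℝ, (∀ y, 0 < π y) ∧ (∑ y, π y = 1) ∧
      ∀ π' : Y → ℝ, (∀ y, 0 < π' y) → (∑ y, π' y = 1) →
        Fobj πref πstar w lam π ≤ Fobj πref πstar w lam π' := by
  classical
  have hne : Nonempty Y := Fintype.card_pos_iff.mp (by omega)
  set B : ℝ := Lsup πstar w πref with hB
  set M : ℝ := ∑ z, πref z * Real.log (πref z) with hM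
  set pmin : ℝ := Finset.univ.inf' (Finset.univ_nonempty) πref with hpmin
  have hpminle : ∀ z, pmin ≤ πref z := fun z => Finset.inf'_le _ (Finset.mem_univ z)
  have hpminpos : 0 < pmin := by
    obtain ⟨z, _, hz⟩ := Finset.exists_mem_eq_inf' (Finset.univ_nonempty) πref
    rw [hpmin, hz]; exact hrefPos z
  have hpmin1 : pmin ≤ 1 := le_trans (hpminle (Classical.arbitrary Y))
    (pol_le_one πref hrefPos hrefSum _)
  set ε : ℝ := min (Real.exp ((M - B / lam) / pmin)) pmin with hε
  have hε0 : 0 < ε := lt_min (Real.exp_pos _) hpminpos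
  have hεpmin : ε ≤ pmin := min_le_right _ _
  have hε1 : ε ≤ 1 := hεpmin.trans hpmin1
  have hεlog : pmin * Real.log ε ≤ M - B / lam := by
    have h1 : Real.log ε ≤ (M - B / lam) / pmin := by
      calc Real.log ε ≤ Real.log (Real.exp ((M - B / lam) / pmin)) :=
            Real.log_le_log hε0 (min_le_left _ _)
        _ = (M - B / lam) / pmin := Real.log_exp _
    calc pmin * Real.log ε ≤ pmin * ((M - B / lam) / pmin) := by
          exact mul_le_mul_of_nonneg_left h1 (le_of_lt hpminpos)
      _ = M - B / lam := by field_simp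
  -- lower bound for escaping policies
  have hlower : ∀ π : Y → ℝ, (∀ z, 0 < π z) → (∑ z, π z = 1) → ∀ z₀ : Y, π z₀ < ε →
      B ≤ Fobj πref πstar w lam π := by
    intro π hpos hsum z₀ hz₀
    have hle1 : ∀ z, π z ≤ 1 := pol_le_one π hpos hsum
    have hunsup : ∑ z, πref z * Real.log (πref z / π z)
        = M + ∑ z, (-(πref z * Real.log (π z))) := by
      rw [hM, ← Finset.sum_add_distrib]
      apply Finset.sum_congr rfl
      intro z _
      rw [Real.log_div (ne_of_gt (hrefPos z)) (ne_of_gt (hpos z))]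
      ring
    have htermnn : ∀ z, 0 ≤ -(πref z * Real.log (π z)) := by
      intro z
      have := Real.log_nonpos (le_of_lt (hpos z)) (hle1 z)
      nlinarith [hrefPos z]
    have hsingle : -(πref z₀ * Real.log (π z₀)) ≤ ∑ z, (-(πref z * Real.log (π z))) :=
      Finset.single_le_sum (fun z _ => htermnn z) (Finset.mem_univ z₀)
    have hlog : Real.log (π z₀) ≤ Real.log ε := Real.log_le_log (hpos z₀) (le_of_lt hz₀)
    have hlogε : Real.log ε ≤ 0 := Real.log_nonpos (le_of_lt hε0) hε1
    have hkey : pmin * Real.log ε ≤ πref z₀ * Real.log (π z₀) → False → True := fun _ _ => trivial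
    have hstep : -(πref z₀ * Real.log (π z₀)) ≥ -(pmin * Real.log ε) := by
      have hlognn : 0 ≤ -Real.log (π z₀) := by linarith
      have : pmin * (-Real.log ε) ≤ πref z₀ * (-Real.log (π z₀)) := by
        apply mul_le_mul (hpminle z₀) (by linarith) (by linarith) (le_of_lt (hrefPos z₀)) |>.trans_eq rfl
      linarith
    have hKL : B / lam ≤ ∑ z, πref z * Real.log (πref z / π z) := by
      rw [hunsup]
      have : -(pmin * Real.log ε) ≥ B / lam - M := by linarith
      linarith
    have hLs : 0 ≤ Lsup πstar w π := lsup_nonneg πstar w hstarPos hw π hpos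
    have : lam * (B / lam) ≤ lam * ∑ z, πref z * Real.log (πref z / π z) :=
      mul_le_mul_of_nonneg_left hKL (le_of_lt hlam)
    rw [mul_div_cancel₀ B (ne_of_gt hlam)] at this
    unfold Fobj
    linarith
  -- the compact set
  set K : Set (Y → ℝ) :=
    (Set.pi Set.univ fun _ : Y => Set.Icc ε 1) ∩ {π : Y → ℝ | ∑ z, π z = 1} with hK
  have hKcompact : IsCompact K := by
    apply IsCompact.inter_right (isCompact_univ_pi fun _ => isCompact_Icc)
    exact isClosed_eq (continuous_finset_sum _ fun i _ => continuous_apply i) continuous_const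
  have hKsub : K ⊆ {π : Y → ℝ | ∀ z, 0 < π z} := by
    intro π hπ z
    exact lt_of_lt_of_le hε0 (hπ.1 z (Set.mem_univ z)).1
  have hrefK : πref ∈ K := by
    constructor
    · intro z _
      exact ⟨(hεpmin.trans (hpminle z)), pol_le_one πref hrefPos hrefSum z⟩
    · exact hrefSum
  have hcont : ContinuousOn (Fobj πref πstar w lam) K :=
    (F_continuousOn πref hrefPos πstar hstarPos w lam).mono hKsub
  obtain ⟨x, hxK, hxmin'⟩ := hKcompact.exists_isMinOn ⟨πref, hrefK⟩ hcont
  have hxmin : ∀ π' ∈ K, Fobj πref πstar w lam x ≤ Fobj πref πstar w lam π' :=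
    fun π' hπ' => hxmin' hπ'
  have hxpos : ∀ z, 0 < x z := hKsub hxK
  have hxsum : ∑ z, x z = 1 := hxK.2
  refine ⟨x, hxpos, hxsum, ?_⟩
  intro π' hpos' hsum'
  by_cases hcase : ∀ z, ε ≤ π' z
  · apply hxmin
    exact ⟨fun z _ => ⟨hcase z, pol_le_one π' hpos' hsum' z⟩, hsum'⟩
  · push_neg at hcase
    obtain ⟨z₀, hz₀⟩ := hcase
    have h1 : B ≤ Fobj πref πstar w lam π' := hlower π' hpos' hsum' z₀ hz₀
    have h2 : Fobj πref πstar w lam x ≤ Fobj πref πstar w lam πref := hxmin πref hrefK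
    have h3 : Fobj πref πstar w lam πref = B := by
      unfold Fobj
      rw [unsup_self_eq_zero πref, mul_zero, add_zero]
    linarith


lemma pol_lt_one {Y : Type*} [Fintype Y] [DecidableEq Y] (hY : 1 < Fintype.card Y)
    (π : Y → ℝ) (hpos : ∀ z, 0 < π z) (hsum : ∑ z, π z = 1) (y : Y) : π y < 1 := by
  have h := Finset.sum_erase_add Finset.univ π (Finset.mem_univ y)
  have hsne : (Finset.univ.erase y).Nonempty := by
    obtain ⟨z, hz⟩ := Fintype.exists_ne_of_one_lt_card hY y
    exact ⟨z, Finset.mem_erase.2 ⟨hz, Finset.mem_univ z⟩⟩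
  have h2 : 0 < ∑ z ∈ Finset.univ.erase y, π z :=
    Finset.sum_pos (fun z _ => hpos z) hsne
  rw [hsum] at h
  linarith

/-- Proposition 4 (TYPO satisfies the strong interpolation criteria).  For the TYPO
objective `L_λ(π) = L_sup(π) + λ L_unsup(π)` with supervised term matching the pairwise
Bradley–Terry preference probabilities induced by the full-support BT-optimal policy `π*`
(with positive weights) and unsupervised term `KL(πref ‖ π)`, a minimizer over
full-support policies exists for each `λ > 0`, and any family of minimizers `π̂ λ`
converges pointwise to `π*` as `λ → 0⁺` and to `πref` as `λ → ∞`. -/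
theorem typo_strong_interpolation
    {Y : Type*} [Fintype Y] [DecidableEq Y] (hY : 1 < Fintype.card Y)
    (πref : Y → ℝ) (hrefPos : ∀ y, 0 < πref y) (hrefSum : ∑ y, πref y = 1)
    (πstar : Y → ℝ) (hstarPos : ∀ y, 0 < πstar y) (hstarSum : ∑ y, πstar y = 1)
    (w : Y → Y → ℝ) (hw : ∀ y₁ y₂, y₁ ≠ y₂ → 0 < w y₁ y₂)
    (L : ℝ → (Y → ℝ) → ℝ)
    (hL : ∀ lam : ℝ, ∀ π : Y → ℝ,
      L lam π = (∑ y₁, ∑ y₂, if y₁ ≠ y₂ then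
          w y₁ y₂ * KLb (πstar y₁ / (πstar y₁ + πstar y₂)) (π y₁ / (π y₁ + π y₂))
        else 0) +
        lam * ∑ y, πref y * Real.log (πref y / π y)) :
    (∀ lam : ℝ, 0 < lam → ∃ π : Y → ℝ, (∀ y, 0 < π y) ∧ (∑ y, π y = 1) ∧
      ∀ π' : Y → ℝ, (∀ y, 0 < π' y) → (∑ y, π' y = 1) → L lam π ≤ L lam π') ∧
    ∀ πhat : ℝ → Y → ℝ,
      (∀ lam : ℝ, 0 < lam → (∀ y, 0 < πhat lam y) ∧ (∑ y, πhat lam y = 1) ∧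
        ∀ π' : Y → ℝ, (∀ y, 0 < π' y) → (∑ y, π' y = 1) →
          L lam (πhat lam) ≤ L lam π') →
      ∀ y : Y,
        Tendsto (fun lam => πhat lam y) (nhdsWithin 0 (Set.Ioi 0)) (nhds (πstar y)) ∧
        Tendsto (fun lam => πhat lam y) atTop (nhds (πref y)) := by
  have hF : ∀ (lam : ℝ) (π : Y → ℝ), Fobj πref πstar w lam π = L lam π :=
    fun lam π => (hL lam π).symm
  constructor
  · -- existence of minimizers
    intro lam hlam
    obtain ⟨π, hpos, hsum, hopt⟩ :=
      typo_exists_min hY πref hrefPos hrefSum πstar hstarPos w hw lam hlam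
    refine ⟨π, hpos, hsum, fun π' h1 h2 => ?_⟩
    rw [← hF lam π, ← hF lam π']
    exact hopt π' h1 h2
  · -- convergence of minimizers
    intro πhat hmin y
    set C : ℝ := ∑ z, πref z * Real.log (πref z / πstar z) with hC
    have hC0 : 0 ≤ C := kl_sum_nonneg Finset.univ πref πstar
      (fun z _ => hrefPos z) (fun z _ => hstarPos z) (by rw [hrefSum, hstarSum])
    set D : ℝ := Lsup πstar w πref with hDdef
    have hfacts : ∀ lam : ℝ, 0 < lam →
        (∀ z, 0 < πhat lam z) ∧ (∑ z, πhat lam z = 1) ∧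
        Lsup πstar w (πhat lam) ≤ lam * C ∧
        (∑ z, πref z * Real.log (πref z / πhat lam z)) ≤ D / lam := by
      intro lam hlam
      obtain ⟨hpos, hsum, hopt⟩ := hmin lam hlam
      have hKL0 : 0 ≤ ∑ z, πref z * Real.log (πref z / πhat lam z) :=
        kl_sum_nonneg Finset.univ πref (πhat lam)
          (fun z _ => hrefPos z) (fun z _ => hpos z) (by rw [hrefSum, hsum])
      have h1 : Fobj πref πstar w lam (πhat lam) ≤ Fobj πref πstar w lam πstar := by
        rw [hF, hF]; exact hopt πstar hstarPos hstarSum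
      have h2 : Fobj πref πstar w lam (πhat lam) ≤ Fobj πref πstar w lam πref := by
        rw [hF, hF]; exact hopt πref hrefPos hrefSum
      have hstarval : Fobj πref πstar w lam πstar = lam * C := by
        unfold Fobj
        rw [lsup_star_eq_zero πstar w hstarPos, hC, zero_add]
      have hrefval : Fobj πref πstar w lam πref = D := by
        unfold Fobj
        rw [unsup_self_eq_zero πref, mul_zero, add_zero, hDdef]
      have hLsnn : 0 ≤ Lsup πstar w (πhat lam) :=
        lsup_nonneg πstar w hstarPos hw _ hpos
      rw [hstarval] at h1
      rw [hrefval] at h2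
      unfold Fobj at h1 h2
      refine ⟨hpos, hsum, ?_, ?_⟩
      · nlinarith [mul_nonneg (le_of_lt hlam) hKL0]
      · rw [le_div_iff₀ hlam]
        nlinarith
    constructor
    · -- λ → 0⁺
      have hid : ∀ᶠ lam in nhdsWithin (0:ℝ) (Set.Ioi 0),
          πhat lam y = (1 + ∑ z ∈ Finset.univ.erase y,
            ((πhat lam y / (πhat lam y + πhat lam z))⁻¹ - 1))⁻¹ := by
        filter_upwards [self_mem_nhdsWithin] with lam hlam
        exact pol_identity (πhat lam) (hfacts lam hlam).1 (hfacts lam hlam).2.1 y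
      have hslim : ∀ z ∈ Finset.univ.erase y,
          Tendsto (fun lam => πhat lam y / (πhat lam y + πhat lam z))
            (nhdsWithin (0:ℝ) (Set.Ioi 0)) (nhds (πstar y / (πstar y + πstar z))) := by
        intro z hz
        have hzy : y ≠ z := (Finset.ne_of_mem_erase hz).symm
        have hwyz := hw y z hzy
        rw [← tendsto_sub_nhds_zero_iff]
        apply squeeze_zero_norm'
          (a := fun lam => Real.sqrt (lam * C / (2 * w y z)))
        · filter_upwards [self_mem_nhdsWithin] with lam hlam
          obtain ⟨hpos, hsum, hls, _⟩ := hfacts lam hlam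
          have hterm := lsup_term_le πstar w hstarPos hw (πhat lam) hpos hzy
          have hkb := klb_pinsker (ratio_mem (hstarPos y) (hstarPos z))
            (ratio_mem (hpos y) (hpos z))
          have h2 : KLb (πstar y / (πstar y + πstar z))
              (πhat lam y / (πhat lam y + πhat lam z)) * w y z ≤ lam * C := by
            nlinarith
          have hsq : (πhat lam y / (πhat lam y + πhat lam z)
              - πstar y / (πstar y + πstar z))^2 ≤ lam * C / (2 * w y z) := by
            rw [le_div_iff₀ (by positivity)]
            nlinarith
          rw [Real.norm_eq_abs, ← Real.sqrt_sq_eq_abs]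
          exact Real.sqrt_le_sqrt hsq
        · have h1 : Continuous fun lam : ℝ => Real.sqrt (lam * C / (2 * w y z)) :=
            Real.continuous_sqrt.comp ((continuous_id.mul continuous_const).div_const _)
          have h2 := h1.tendsto 0
          have h3 : Real.sqrt ((0:ℝ) * C / (2 * w y z)) = 0 := by
            rw [zero_mul, zero_div, Real.sqrt_zero]
          rw [h3] at h2
          exact h2.mono_left nhdsWithin_le_nhds
      have hne0 : (1 + ∑ z ∈ Finset.univ.erase y,
          ((πstar y / (πstar y + πstar z))⁻¹ - 1)) ≠ 0 := by
        intro hzero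
        have hidstar := pol_identity πstar hstarPos hstarSum y
        rw [hzero, inv_zero] at hidstar
        exact absurd hidstar (ne_of_gt (hstarPos y))
      have hmain : Tendsto (fun lam => (1 + ∑ z ∈ Finset.univ.erase y,
          ((πhat lam y / (πhat lam y + πhat lam z))⁻¹ - 1))⁻¹)
          (nhdsWithin (0:ℝ) (Set.Ioi 0))
          (nhds ((1 + ∑ z ∈ Finset.univ.erase y,
            ((πstar y / (πstar y + πstar z))⁻¹ - 1))⁻¹)) := by
        apply Tendsto.inv₀ _ hne0
        apply Tendsto.add tendsto_const_nhds
        apply tendsto_finset_sum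
        intro z hz
        exact ((hslim z hz).inv₀
          (ne_of_gt (ratio_mem (hstarPos y) (hstarPos z)).1)).sub tendsto_const_nhds
      rw [← pol_identity πstar hstarPos hstarSum y] at hmain
      exact Filter.Tendsto.congr' (Filter.EventuallyEq.symm hid) hmain
    · -- λ → ∞
      rw [← tendsto_sub_nhds_zero_iff]
      apply squeeze_zero_norm' (a := fun lam => Real.sqrt (D / (2 * lam)))
      · filter_upwards [eventually_gt_atTop (0:ℝ)] with lam hlam
        obtain ⟨hpos, hsum, _, hKL⟩ := hfacts lam hlam
        have hg := kl_group hY πref (πhat lam) hrefPos hpos hrefSum hsum y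
        have hpin := klb_pinsker
          (⟨hrefPos y, pol_lt_one hY πref hrefPos hrefSum y⟩ :
            πref y ∈ Set.Ioo (0:ℝ) 1)
          (⟨hpos y, pol_lt_one hY (πhat lam) hpos hsum y⟩ :
            πhat lam y ∈ Set.Ioo (0:ℝ) 1)
        have hsq : (πhat lam y - πref y)^2 ≤ D / (2 * lam) := by
          rw [le_div_iff₀ (by positivity)]
          have h2 : 2 * (πref y - πhat lam y)^2 * lam ≤ D := by
            have := (le_div_iff₀ hlam).mp (le_trans (le_trans hpin hg) hKL)
            linarith
          nlinarith
        rw [Real.norm_eq_abs, ← Real.sqrt_sq_eq_abs]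
        exact Real.sqrt_le_sqrt hsq
      · have h2 : Tendsto (fun lam : ℝ => (D / 2) * lam⁻¹) atTop
            (nhds ((D / 2) * 0)) := tendsto_inv_atTop_zero.const_mul (D / 2)
        rw [mul_zero] at h2
        have h1 : Tendsto (fun lam : ℝ => D / (2 * lam)) atTop (nhds 0) := by
          refine h2.congr (fun lam => ?_)
          rw [div_eq_mul_inv D (2 * lam), mul_inv]
          ring
        have h3 := (Real.continuous_sqrt.tendsto 0).comp h1
        simpa [Function.comp_def] using h3
end

section
/- For all real numbers γ₁, γ₂ with 0 < γ₁ < γ₂ and all u₁, u₂ ≥ 0: log(γ₁ + u₂) ≤ log(γ₁ + u₁) + ((γ₂ + u₁)/(γ₁ + u₁))·(log(γ₂ + u₂) − log(γ₂ + u₁)). That is, with g(u) = log(γ₁ + u) and f(u) = log(γ₂ + u), the function g is concave relative to f on [0, ∞): g(u₂) ≤ g(u₁) + (g'(u₁)/f'(u₁))·(f(u₂) − f(u₁)) for all u₁, u₂ ≥ 0. -/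
open Real

/-- Key monotonicity: `t ↦ t * (log (t+s) - log t)` is monotone on positive `t` with `t+s>0`. -/
lemma aux_mono (s a b : ℝ) (ha : 0 < a) (hab : a ≤ b) (hs : -a < s) :
    a * (Real.log (a + s) - Real.log a) ≤ b * (Real.log (b + s) - Real.log b) := by
  have hd : ∀ t ∈ Set.Ioo a b, HasDerivAt (fun t : ℝ => t * (Real.log (t + s) - Real.log t))
      ((Real.log (t + s) - Real.log t) + t * ((t + s)⁻¹ - t⁻¹)) t := by
    intro t ht
    have ht0 : 0 < t := lt_of_lt_of_le ha (le_of_lt ht.1)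
    have hts : 0 < t + s := by nlinarith [ht.1]
    have h1 : HasDerivAt (fun t : ℝ => Real.log (t + s)) ((t + s)⁻¹ * 1) t :=
      (Real.hasDerivAt_log hts.ne').comp (h₂ := Real.log) t ((hasDerivAt_id t).add_const s)
    have h2 : HasDerivAt (fun t : ℝ => Real.log (t + s) - Real.log t)
        ((t + s)⁻¹ - t⁻¹) t := by
      exact (h1.sub (Real.hasDerivAt_log ht0.ne')).congr_deriv (by ring)
    have := (hasDerivAt_id t).mul h2
    refine this.congr_deriv ?_
    simp only [id_eq]; ring
  have key : MonotoneOn (fun t : ℝ => t * (Real.log (t + s) - Real.log t)) (Set.Icc a b) := by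
    apply monotoneOn_of_deriv_nonneg (convex_Icc a b)
    · apply ContinuousOn.mul continuousOn_id
      apply ContinuousOn.sub
      · apply ContinuousOn.log (by fun_prop)
        intro t ht; nlinarith [ht.1]
      · apply ContinuousOn.log continuousOn_id
        intro t ht; exact ne_of_gt (lt_of_lt_of_le ha ht.1)
    · rw [interior_Icc]
      intro t ht
      exact (hd t ht).differentiableAt.differentiableWithinAt
    · rw [interior_Icc]
      intro t ht
      rw [(hd t ht).deriv]
      have ht0 : 0 < t := lt_of_lt_of_le ha (le_of_lt ht.1)
      have hts : 0 < t + s := by nlinarith [ht.1]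
      have hlog : Real.log (t / (t + s)) ≤ t / (t + s) - 1 :=
        Real.log_le_sub_one_of_pos (by positivity)
      rw [Real.log_div ht0.ne' hts.ne'] at hlog
      have e : t * ((t + s)⁻¹ - t⁻¹) = t / (t + s) - 1 := by field_simp
      rw [e]; linarith
  exact key ⟨le_refl a, hab⟩ ⟨hab, le_refl b⟩ hab

/-- For `0 < γ₁ < γ₂` and `u₁, u₂ ≥ 0`, the function `g(u) = log (γ₁ + u)` is concave
relative to `f(u) = log (γ₂ + u)` on `[0, ∞)`:
`g(u₂) ≤ g(u₁) + (g'(u₁)/f'(u₁)) (f(u₂) − f(u₁))`, where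
`g'(u₁)/f'(u₁) = (γ₂ + u₁)/(γ₁ + u₁)`. -/
theorem log_shift_relative_concavity
    (γ₁ γ₂ : ℝ) (h₁ : 0 < γ₁) (h₁₂ : γ₁ < γ₂)
    (u₁ u₂ : ℝ) (hu₁ : 0 ≤ u₁) (hu₂ : 0 ≤ u₂) :
    Real.log (γ₁ + u₂) ≤
      Real.log (γ₁ + u₁) +
        ((γ₂ + u₁) / (γ₁ + u₁)) * (Real.log (γ₂ + u₂) - Real.log (γ₂ + u₁)) := by
  set a := γ₁ + u₁ with ha_def
  set b := γ₂ + u₁ with hb_def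
  have ha : 0 < a := by positivity
  have hab : a ≤ b := by simp only [ha_def, hb_def]; linarith
  have hs : -a < u₂ - u₁ := by simp only [ha_def]; nlinarith
  have key := aux_mono (u₂ - u₁) a b ha hab hs
  have e1 : a + (u₂ - u₁) = γ₁ + u₂ := by rw [ha_def]; ring
  have e2 : b + (u₂ - u₁) = γ₂ + u₂ := by rw [hb_def]; ring
  rw [e1, e2] at key
  rw [div_mul_eq_mul_div, ← sub_le_iff_le_add', le_div_iff₀ ha]
  nlinarith [key]
end

section
/- Let g : (0, ∞) → ℝ be a function with g(t) → −∞ as t → 0⁺, let λ > 0 and c ∈ ℝ, and let σ(x) = 1/(1 + exp(−x)). Then the function t ↦ −log σ(λ·(c − g(t))) is strictly positive for every t > 0 and tends to 0 as t → 0⁺; consequently its infimum over t ∈ (0, ∞) equals 0, independently of the value of c. In particular, any valid f-DPO per-sample loss −log σ(λ·f'(π_θ(y_w|x)/π_ref(y_w|x)) − λ·f'(π_θ(y_l|x)/π_ref(y_l|x))), where f is convex with f' invertible on (0, ∞) and f'(t) → −∞ as t → 0⁺, can be driven arbitrarily close to 0 by sending π_θ(y_l|x) → 0 with π_θ(y_w|x)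 held fixed, so its infimum is achieved in the limit independently of the reference policy π_ref. -/
open Filter

lemma neg_log_logistic (x : ℝ) :
    -Real.log (logistic x) = Real.log (1 + Real.exp (-x)) := by
  have h : (0:ℝ) < 1 + Real.exp (-x) := by positivity
  rw [logistic, Real.log_div one_ne_zero (ne_of_gt h), Real.log_one]
  ring

lemma neg_log_logistic_pos (x : ℝ) : 0 < -Real.log (logistic x) := by
  rw [neg_log_logistic]
  have : (1:ℝ) < 1 + Real.exp (-x) := by
    have := Real.exp_pos (-x); linarith
  exact Real.log_pos this

lemma tendsto_neg_log_logistic :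
    Tendsto (fun x => -Real.log (logistic x)) atTop (nhds 0) := by
  simp only [neg_log_logistic]
  have h1 : Tendsto (fun x : ℝ => 1 + Real.exp (-x)) atTop (nhds 1) := by
    have := Real.tendsto_exp_neg_atTop_nhds_zero
    have h := this.const_add (1:ℝ)
    simpa using h
  have := (Real.continuousAt_log (by norm_num : (1:ℝ) ≠ 0)).tendsto.comp h1
  simpa [Real.log_one, Function.comp_def] using this

/-- If `g(t) → −∞` as `t → 0⁺` (as for `f'` of any valid `f`-DPO loss), `λ > 0`, and
`c ∈ ℝ`, then `t ↦ −log σ(λ (c − g t))` is strictly positive on `(0, ∞)`, tends to `0`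
as `t → 0⁺`, and hence has infimum `0` over `(0, ∞)`, independently of `c` (so the
`f`-DPO loss can be driven to its infimum independently of the reference policy). -/
theorem fdpo_infimum_zero_independent_of_reference
    (g : ℝ → ℝ) (hg : Tendsto g (nhdsWithin 0 (Set.Ioi 0)) atBot)
    (lam : ℝ) (hlam : 0 < lam) (c : ℝ) :
    (∀ t : ℝ, 0 < t → 0 < -Real.log (logistic (lam * (c - g t)))) ∧
    Tendsto (fun t => -Real.log (logistic (lam * (c - g t))))
      (nhdsWithin 0 (Set.Ioi 0)) (nhds 0) ∧
    sInf ((fun t => -Real.log (logistic (lam * (c - g t)))) '' Set.Ioi 0) = 0 := by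
  have hpos : ∀ t : ℝ, 0 < t → 0 < -Real.log (logistic (lam * (c - g t))) :=
    fun t _ => neg_log_logistic_pos _
  have harg : Tendsto (fun t => lam * (c - g t)) (nhdsWithin 0 (Set.Ioi 0)) atTop := by
    have h1 : Tendsto (fun t => c - g t) (nhdsWithin 0 (Set.Ioi 0)) atTop :=
      tendsto_atTop_add_const_left _ c (tendsto_neg_atTop_iff.mpr hg) |>.congr (fun t => by ring)
    exact h1.const_mul_atTop hlam
  have htend : Tendsto (fun t => -Real.log (logistic (lam * (c - g t))))
      (nhdsWithin 0 (Set.Ioi 0)) (nhds 0) := tendsto_neg_log_logistic.comp harg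
  refine ⟨hpos, htend, ?_⟩
  set S := (fun t => -Real.log (logistic (lam * (c - g t)))) '' Set.Ioi 0 with hS
  have hbdd : ∀ y ∈ S, 0 ≤ y := by
    rintro y ⟨t, ht, rfl⟩
    exact (hpos t ht).le
  have hne : S.Nonempty := ⟨_, ⟨1, by norm_num, rfl⟩⟩
  refine le_antisymm ?_ (le_csInf hne hbdd)
  by_contra hlt
  push_neg at hlt
  have hev := htend.eventually (eventually_lt_nhds hlt)
  obtain ⟨t, hlt', ht⟩ := (hev.and self_mem_nhdsWithin).exists
  have : sInf S ≤ -Real.log (logistic (lam * (c - g t))) :=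
    csInf_le ⟨0, fun y hy => hbdd y hy⟩ ⟨t, ht, rfl⟩
  linarith
end

section
/- (Proposition 3, TYPO preservation.) Let Y be a finite type with at least two elements. Consider two prompts x_g and x_b with full-support BT-optimal policies π*_g and π*_b on Y, and full-support reference policies q_g and q_b with q_g = π*_g and q_b ≠ π*_b. For λ > 0, positive pair weights w_g(y₁,y₂), w_b(y₁,y₂) > 0, and a pair of full-support policies (π_g, π_b), define the TYPO loss L(π_g, π_b) = L_g(π_g) + L_b(π_b), where for a prompt with target π* and reference q, the per-prompt loss of π is ∑_{y₁≠y₂} w(y₁,y₂)·KL_b(π*(y₁)/(π*(y₁)+π*(y₂)) ‖ π(y₁)/(π(y₁)+π(y₂))) + λ·∑_y q(y)·log(q(y)/π(y)). Then every global minimizer (π̂_g, π̂_b) of L satisfies π̂_g = π*_g, irrespective of the value of π̂_b; in particular, the optimal policy is preserved at the good prompt even when the minimizing policy at the bad prompt differs from its reference q_b. -/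
/-!
At the good prompt the target policy `π*_g` is also the reference, so it makes both the pairwise
Bradley–Terry term and the KL term vanish; since both terms are nonnegative, `Lg` attains its
minimum `0` exactly there. Because the loss is a sum over prompts, replacing `π̂_g` by `π*_g` while
keeping `π̂_b` shows `Lg π̂_g ≤ 0`, hence `KL(q_g ‖ π̂_g) = 0`, and Gibbs' equality case gives
`π̂_g = q_g = π*_g`.
-/

open Finset InformationTheory

-- Also at `x = 0`, where `x / x = 0` and `Real.log 0 = 0`.
lemma mul_log_div_self (x : ℝ) : x * Real.log (x / x) = 0 := by
  rcases eq_or_ne x 0 with rfl | hx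
  · simp
  · simp [div_self hx]

lemma mul_log_div_sub_sub_eq_mul_klFun (p : ℝ) {q : ℝ} (hq : q ≠ 0) :
    p * Real.log (p / q) - (p - q) = q * klFun (p / q) := by
  rw [klFun_apply]
  field_simp
  ring

lemma KLb_self (p : ℝ) : KLb p p = 0 := by
  simp only [KLb, mul_log_div_self, add_zero]

-- `KLb p q = q * klFun (p / q) + (1 - q) * klFun ((1 - p) / (1 - q))`.
lemma KLb_nonneg {p q : ℝ} (hp₀ : 0 ≤ p) (hp₁ : p ≤ 1) (hq₀ : 0 < q) (hq₁ : q < 1) :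
    0 ≤ KLb p q := by
  have h₁ := mul_log_div_sub_sub_eq_mul_klFun p hq₀.ne'
  have h₂ := mul_log_div_sub_sub_eq_mul_klFun (1 - p) (sub_pos.2 hq₁).ne'
  have k₁ := mul_nonneg hq₀.le (klFun_nonneg (div_nonneg hp₀ hq₀.le))
  have k₂ := mul_nonneg (sub_pos.2 hq₁).le
    (klFun_nonneg (div_nonneg (sub_nonneg.2 hp₁) (sub_pos.2 hq₁).le))
  unfold KLb
  linarith

section

variable {Y : Type*} [Fintype Y]

noncomputable def forwardKL (q π : Y → ℝ) : ℝ := ∑ y, q y * Real.log (q y / π y)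

/-- `π y₁ / (π y₁ + π y₂)` is the Bradley–Terry probability that `y₁` is preferred to `y₂`. -/
noncomputable def pairwiseBTLoss [DecidableEq Y] (w : Y → Y → ℝ) (πstar π : Y → ℝ) : ℝ :=
  ∑ y₁, ∑ y₂, if y₁ ≠ y₂ then
    w y₁ y₂ * KLb (πstar y₁ / (πstar y₁ + πstar y₂)) (π y₁ / (π y₁ + π y₂)) else 0

lemma forwardKL_self (q : Y → ℝ) : forwardKL q q = 0 := by
  simp only [forwardKL, mul_log_div_self, sum_const_zero]

lemma forwardKL_eq_sum_mul_klFun {q π : Y → ℝ} (hπ : ∀ y, 0 < π y)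
    (hsum : ∑ y, q y = ∑ y, π y) :
    forwardKL q π = ∑ y, π y * klFun (q y / π y) := by
  have hdiff : ∑ y, (q y - π y) = 0 := by rw [sum_sub_distrib, hsum, sub_self]
  rw [forwardKL, ← sub_zero (∑ y, q y * Real.log (q y / π y)), ← hdiff, ← sum_sub_distrib]
  exact sum_congr rfl fun y _ => mul_log_div_sub_sub_eq_mul_klFun (q y) (hπ y).ne'

lemma forwardKL_nonneg {q π : Y → ℝ} (hq : ∀ y, 0 ≤ q y) (hπ : ∀ y, 0 < π y)
    (hsum : ∑ y, q y = ∑ y, π y) : 0 ≤ forwardKL q π := by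
  rw [forwardKL_eq_sum_mul_klFun hπ hsum]
  exact sum_nonneg fun y _ => mul_nonneg (hπ y).le (klFun_nonneg (div_nonneg (hq y) (hπ y).le))

lemma eq_of_forwardKL_nonpos {q π : Y → ℝ} (hq : ∀ y, 0 ≤ q y) (hπ : ∀ y, 0 < π y)
    (hsum : ∑ y, q y = ∑ y, π y) (hKL : forwardKL q π ≤ 0) : q = π := by
  have hterm : ∀ y ∈ univ, 0 ≤ π y * klFun (q y / π y) := fun y _ =>
    mul_nonneg (hπ y).le (klFun_nonneg (div_nonneg (hq y) (hπ y).le))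
  rw [forwardKL_eq_sum_mul_klFun hπ hsum] at hKL
  have hzero := (sum_eq_zero_iff_of_nonneg hterm).1 (hKL.antisymm (sum_nonneg hterm))
  funext y
  have hk : klFun (q y / π y) = 0 :=
    (mul_eq_zero.1 (hzero y (mem_univ y))).resolve_left (hπ y).ne'
  rw [klFun_eq_zero_iff (div_nonneg (hq y) (hπ y).le), div_eq_one_iff_eq (hπ y).ne'] at hk
  exact hk

lemma div_add_mem_Icc {a b : ℝ} (ha : 0 ≤ a) (hb : 0 ≤ b) : a / (a + b) ∈ Set.Icc 0 1 :=
  ⟨div_nonneg ha (add_nonneg ha hb), div_le_one_of_le₀ (le_add_of_nonneg_right hb) (add_nonneg ha hb)⟩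

lemma div_add_mem_Ioo {a b : ℝ} (ha : 0 < a) (hb : 0 < b) : a / (a + b) ∈ Set.Ioo 0 1 :=
  ⟨div_pos ha (add_pos ha hb), (div_lt_one (add_pos ha hb)).2 (lt_add_of_pos_right a hb)⟩

variable [DecidableEq Y]

lemma pairwiseBTLoss_self (w : Y → Y → ℝ) (πstar : Y → ℝ) : pairwiseBTLoss w πstar πstar = 0 := by
  simp only [pairwiseBTLoss, KLb_self, mul_zero, ite_self, sum_const_zero]

lemma pairwiseBTLoss_nonneg {w : Y → Y → ℝ} {πstar π : Y → ℝ}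
    (hw : ∀ y₁ y₂, y₁ ≠ y₂ → 0 ≤ w y₁ y₂) (hstar : ∀ y, 0 ≤ πstar y) (hπ : ∀ y, 0 < π y) :
    0 ≤ pairwiseBTLoss w πstar π := by
  refine sum_nonneg fun y₁ _ => sum_nonneg fun y₂ _ => ?_
  split_ifs with hne
  · obtain ⟨hp₀, hp₁⟩ := div_add_mem_Icc (hstar y₁) (hstar y₂)
    obtain ⟨hq₀, hq₁⟩ := div_add_mem_Ioo (hπ y₁) (hπ y₂)
    exact mul_nonneg (hw y₁ y₂ hne) (KLb_nonneg hp₀ hp₁ hq₀ hq₁)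
  · exact le_rfl

end

theorem typo_preservation_general
    {Y : Type*} [Fintype Y] [DecidableEq Y]
    (πstarg qg : Y → ℝ)
    (hgPos : ∀ y, 0 < πstarg y) (hgSum : ∑ y, πstarg y = 1)
    (hqgPos : ∀ y, 0 < qg y) (hqgSum : ∑ y, qg y = 1)
    (hgood : qg = πstarg)
    (lam : ℝ) (hlam : 0 < lam)
    (wg : Y → Y → ℝ)
    (hwg : ∀ y₁ y₂, y₁ ≠ y₂ → 0 < wg y₁ y₂)
    (Lg Lb : (Y → ℝ) → ℝ)
    (hLg : ∀ π : Y → ℝ,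
      Lg π = (∑ y₁, ∑ y₂, if y₁ ≠ y₂ then
          wg y₁ y₂ * KLb (πstarg y₁ / (πstarg y₁ + πstarg y₂)) (π y₁ / (π y₁ + π y₂))
        else 0) +
        lam * ∑ y, qg y * Real.log (qg y / π y))
    (πhatg πhatb : Y → ℝ)
    (hhatgPos : ∀ y, 0 < πhatg y) (hhatgSum : ∑ y, πhatg y = 1)
    (hhatbPos : ∀ y, 0 < πhatb y) (hhatbSum : ∑ y, πhatb y = 1)
    (hmin : ∀ πg πb : Y → ℝ, (∀ y, 0 < πg y) → (∑ y, πg y = 1) →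
      (∀ y, 0 < πb y) → (∑ y, πb y = 1) →
      Lg πhatg + Lb πhatb ≤ Lg πg + Lb πb) :
    πhatg = πstarg := by
  have hLg' : ∀ π, Lg π = pairwiseBTLoss wg πstarg π + lam * forwardKL qg π := hLg
  have hLg_star : Lg πstarg = 0 := by
    rw [hLg', pairwiseBTLoss_self, ← hgood, forwardKL_self, mul_zero, add_zero]
  have hLg_hat : Lg πhatg ≤ 0 := by
    linarith [hmin πstarg πhatb hgPos hgSum hhatbPos hhatbSum]
  have hBT := pairwiseBTLoss_nonneg (fun y₁ y₂ h => (hwg y₁ y₂ h).le)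
    (fun y => (hgPos y).le) hhatgPos
  have hKL : forwardKL qg πhatg ≤ 0 := by
    rw [hLg'] at hLg_hat
    exact nonpos_of_mul_nonpos_right (by linarith) hlam
  rw [← hgood]
  exact (eq_of_forwardKL_nonpos (fun y => (hqgPos y).le) hhatgPos
    (hqgSum.trans hhatgSum.symm) hKL).symm

/-- Proposition 3 (TYPO preservation).  With a good prompt (reference `qg` equal to its
BT-optimal policy `π*_g`) and a bad prompt (reference `qb ≠ π*_b`), and the TYPO loss
decomposing additively over the two prompts, every global minimizer `(π̂g, π̂b)` over
pairs of full-support policies satisfies `π̂g = π*_g`, irrespective of `π̂b`. -/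
theorem typo_preservation
    {Y : Type*} [Fintype Y] [DecidableEq Y] (hY : 1 < Fintype.card Y)
    (πstarg πstarb qg qb : Y → ℝ)
    (hgPos : ∀ y, 0 < πstarg y) (hgSum : ∑ y, πstarg y = 1)
    (hbPos : ∀ y, 0 < πstarb y) (hbSum : ∑ y, πstarb y = 1)
    (hqgPos : ∀ y, 0 < qg y) (hqgSum : ∑ y, qg y = 1)
    (hqbPos : ∀ y, 0 < qb y) (hqbSum : ∑ y, qb y = 1)
    (hgood : qg = πstarg) (hbad : qb ≠ πstarb)
    (lam : ℝ) (hlam : 0 < lam)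
    (wg wb : Y → Y → ℝ)
    (hwg : ∀ y₁ y₂, y₁ ≠ y₂ → 0 < wg y₁ y₂)
    (hwb : ∀ y₁ y₂, y₁ ≠ y₂ → 0 < wb y₁ y₂)
    (Lg Lb : (Y → ℝ) → ℝ)
    (hLg : ∀ π : Y → ℝ,
      Lg π = (∑ y₁, ∑ y₂, if y₁ ≠ y₂ then
          wg y₁ y₂ * KLb (πstarg y₁ / (πstarg y₁ + πstarg y₂)) (π y₁ / (π y₁ + π y₂))
        else 0) +
        lam * ∑ y, qg y * Real.log (qg y / π y))
    (hLb : ∀ π : Y → ℝ,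
      Lb π = (∑ y₁, ∑ y₂, if y₁ ≠ y₂ then
          wb y₁ y₂ * KLb (πstarb y₁ / (πstarb y₁ + πstarb y₂)) (π y₁ / (π y₁ + π y₂))
        else 0) +
        lam * ∑ y, qb y * Real.log (qb y / π y))
    (πhatg πhatb : Y → ℝ)
    (hhatgPos : ∀ y, 0 < πhatg y) (hhatgSum : ∑ y, πhatg y = 1)
    (hhatbPos : ∀ y, 0 < πhatb y) (hhatbSum : ∑ y, πhatb y = 1)
    (hmin : ∀ πg πb : Y → ℝ, (∀ y, 0 < πg y) → (∑ y, πg y = 1) →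
      (∀ y, 0 < πb y) → (∑ y, πb y = 1) →
      Lg πhatg + Lb πhatb ≤ Lg πg + Lb πb) :
    πhatg = πstarg :=
  typo_preservation_general πstarg qg hgPos hgSum hqgPos hqgSum hgood lam hlam wg hwg Lg Lb hLg
    πhatg πhatb hhatgPos hhatgSum hhatbPos hhatbSum hmin
end

section
/- (Theorem 1, QPO preservation impossibility.) Let Y = {y₁, y₂}, let λ > 0, let ψ(·, λ) : ℝ → ℝ be a quasi-convex function, and let μ : (0, ∞) → ℝ be continuous and strictly increasing with μ(t) → −∞ as t → 0⁺ and μ(t) → +∞ as t → ∞. Fix a preference probability p ∈ (0,1) common to two prompts x_g and x_b, and suppose F(u) = p·ψ(u, λ) + (1−p)·ψ(−u, λ) attains a unique global minimum over ℝ at u = u*. Let q_g and q_b be full-support reference policies on Y with q_g equal to the BT-optimal policy π*_g at x_g (i.e., q_g(y₁)/(q_g(y₁)+q_g(y₂)) = p) and q_b ≠ π*_b at x_b. Define the QPO loss over pairs of full-support policies by L(π_g, π_b) = w_g·F(u(π_g, q_g)) + w_b·F(u(π_b, q_b)), where u(π, q) = μ(π(y₁)/q(y₁)) − μ(π(y₂)/q(y₂))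 and w_g, w_b > 0. Then every global minimizer (π̂_g, π̂_b) of L satisfies: if π̂_b ≠ q_b, then π̂_g ≠ π*_g. That is, a QPO minimizer cannot move the policy away from the reference at the bad prompt while simultaneously preserving the BT-optimal policy at the good prompt. -/
/-!
The loss decouples over the two prompts, and for every full-support reference `q` the margin
`π ↦ μ (π 0 / q 0) - μ (π 1 / q 1)` maps full-support policies onto `ℝ`: along
`π = (t, 1 - t)` it tends to `-∞` as `t → 0⁺` and to `+∞` as `t → 1⁻`, so the intermediate value
theorem applies. Hence a global minimizer realizes the unique minimizer `u*` of `F` at both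
prompts. If `π̂g = π*g = qg`, the good margin is `0`, so `u* = 0`; then the bad margin vanishes as
well, and strict monotonicity of `μ` forces `π̂b = qb`.
-/

open Filter Set Topology

noncomputable def qpoMargin (μ : ℝ → ℝ) (q π : Fin 2 → ℝ) : ℝ :=
  μ (π 0 / q 0) - μ (π 1 / q 1)

lemma eq_of_weighted_sum_le_of_unique_min {F : ℝ → ℝ} {u₀ : ℝ} (hmin : ∀ u, F u₀ ≤ F u)
    (huniq : ∀ u, F u = F u₀ → u = u₀) {a b u v : ℝ} (ha : 0 < a) (hb : 0 < b)
    (h : a * F u + b * F v ≤ a * F u₀ + b * F u₀) : u = u₀ ∧ v = u₀ := by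
  have hu := mul_le_mul_of_nonneg_left (hmin u) ha.le
  have hv := mul_le_mul_of_nonneg_left (hmin v) hb.le
  refine ⟨huniq u (le_antisymm ?_ (hmin u)), huniq v (le_antisymm ?_ (hmin v))⟩
  · exact le_of_mul_le_mul_left (by linarith) ha
  · exact le_of_mul_le_mul_left (by linarith) hb

section Margin

variable {μ : ℝ → ℝ}

lemma tendsto_div_const_nhdsGT_zero {a : ℝ} (ha : 0 < a) :
    Tendsto (· / a) (𝓝[>] 0) (𝓝[>] 0) :=
  tendsto_nhdsWithin_iff.2
    ⟨by simpa using ((continuous_id.div_const a).tendsto 0).mono_left nhdsWithin_le_nhds,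
      eventually_mem_nhdsWithin.mono fun _ ht => div_pos ht ha⟩

lemma tendsto_sub_comp_one_sub_nhdsGT_zero_atBot (hμcont : ContinuousOn μ (Ioi 0))
    (hμ0 : Tendsto μ (𝓝[>] 0) atBot) {a b : ℝ} (ha : 0 < a) (hb : 0 < b) :
    Tendsto (fun t => μ (t / a) - μ ((1 - t) / b)) (𝓝[>] 0) atBot := by
  have hcont : ContinuousAt (fun t => μ ((1 - t) / b)) 0 :=
    (hμcont.continuousAt (Ioi_mem_nhds (by simpa using hb))).comp (by fun_prop)
  simpa only [Function.comp_def, sub_eq_add_neg] using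
    (hμ0.comp (tendsto_div_const_nhdsGT_zero ha)).atBot_add
      (hcont.tendsto.mono_left nhdsWithin_le_nhds).neg

lemma surjOn_sub_comp_one_sub (hμcont : ContinuousOn μ (Ioi 0))
    (hμ0 : Tendsto μ (𝓝[>] 0) atBot) {a b : ℝ} (ha : 0 < a) (hb : 0 < b) :
    SurjOn (fun t => μ (t / a) - μ ((1 - t) / b)) (Ioo 0 1) univ := by
  have hbot := tendsto_sub_comp_one_sub_nhdsGT_zero_atBot hμcont hμ0 ha hb
  -- by symmetry: the margin for `(a, b)` at `t` is minus the margin for `(b, a)` at `1 - t`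
  have htop : Tendsto (fun t => μ (t / a) - μ ((1 - t) / b)) (𝓝[<] 1) atTop := by
    have h1 : Tendsto (fun t : ℝ => 1 - t) (𝓝[<] 1) (𝓝[>] 0) := by
      have := map_subLeft_nhdsLT (c := (1 : ℝ)) (a := 1)
      rw [sub_self] at this
      exact this.le
    simpa [Function.comp_def] using
      tendsto_neg_atBot_atTop.comp
        ((tendsto_sub_comp_one_sub_nhdsGT_zero_atBot hμcont hμ0 hb ha).comp h1)
  have hcont : ContinuousOn (fun t => μ (t / a) - μ ((1 - t) / b)) (Ioo 0 1) :=
    (hμcont.comp (by fun_prop) fun t ht => div_pos ht.1 ha).sub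
      (hμcont.comp (by fun_prop) fun t ht => div_pos (sub_pos.2 ht.2) hb)
  rw [← nhdsWithin_Ioo_eq_nhdsGT one_pos] at hbot
  rw [← nhdsWithin_Ioo_eq_nhdsLT one_pos] at htop
  have : (𝓝[Ioo (0 : ℝ) 1] 0).NeBot := left_nhdsWithin_Ioo_neBot one_pos
  have : (𝓝[Ioo (0 : ℝ) 1] 1).NeBot := right_nhdsWithin_Ioo_neBot one_pos
  exact isPreconnected_Ioo.intermediate_value_Iii (l₁ := 𝓝[Ioo 0 1] 0) (l₂ := 𝓝[Ioo 0 1] 1)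
    inf_le_right inf_le_right hcont hbot htop

lemma exists_qpoMargin_eq (hμcont : ContinuousOn μ (Ioi 0)) (hμ0 : Tendsto μ (𝓝[>] 0) atBot)
    {q : Fin 2 → ℝ} (hq : ∀ i, 0 < q i) (u : ℝ) :
    ∃ π : Fin 2 → ℝ, (∀ i, 0 < π i) ∧ π 0 + π 1 = 1 ∧ qpoMargin μ q π = u := by
  obtain ⟨t, ⟨ht0, ht1⟩, htu⟩ := surjOn_sub_comp_one_sub hμcont hμ0 (hq 0) (hq 1) (mem_univ u)
  refine ⟨![t, 1 - t], fun i => ?_, by simp, by simpa [qpoMargin] using htu⟩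
  fin_cases i
  · simpa using ht0
  · simpa using ht1

lemma qpoMargin_self {q : Fin 2 → ℝ} (hq : ∀ i, q i ≠ 0) : qpoMargin μ q q = 0 := by
  simp [qpoMargin, div_self (hq 0), div_self (hq 1)]

lemma eq_of_qpoMargin_eq_zero (hμmono : StrictMonoOn μ (Ioi 0)) {π q : Fin 2 → ℝ}
    (hπ : ∀ i, 0 < π i) (hπsum : π 0 + π 1 = 1) (hq : ∀ i, 0 < q i) (hqsum : q 0 + q 1 = 1)
    (h : qpoMargin μ q π = 0) : π = q := by
  have hratio : π 0 / q 0 = π 1 / q 1 :=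
    hμmono.injOn (div_pos (hπ 0) (hq 0)) (div_pos (hπ 1) (hq 1)) (sub_eq_zero.1 h)
  rw [div_eq_div_iff (hq 0).ne' (hq 1).ne'] at hratio
  have h0 : π 0 = q 0 := by linear_combination hratio - π 0 * hqsum + q 0 * hπsum
  funext i
  fin_cases i
  · exact h0
  · show π 1 = q 1
    linarith

end Margin

theorem qpo_preservation_impossibility_general
    (μ : ℝ → ℝ)
    (hμcont : ContinuousOn μ (Set.Ioi 0))
    (hμmono : StrictMonoOn μ (Set.Ioi 0))
    (hμ0 : Filter.Tendsto μ (nhdsWithin 0 (Set.Ioi 0)) Filter.atBot)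
    (F : ℝ → ℝ)
    (ustar : ℝ) (hustarMin : ∀ u, F ustar ≤ F u)
    (hustarUniq : ∀ u, F u = F ustar → u = ustar)
    (πstarg qg qb : Fin 2 → ℝ)
    (hqgPos : ∀ i, 0 < qg i)
    (hqbPos : ∀ i, 0 < qb i) (hqbSum : qb 0 + qb 1 = 1)
    (hgood : qg = πstarg)
    (wg wb : ℝ) (hwg : 0 < wg) (hwb : 0 < wb)
    (L : (Fin 2 → ℝ) → (Fin 2 → ℝ) → ℝ)
    (hL : ∀ πg πb : Fin 2 → ℝ,
      L πg πb = wg * F (μ (πg 0 / qg 0) - μ (πg 1 / qg 1)) +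
                wb * F (μ (πb 0 / qb 0) - μ (πb 1 / qb 1)))
    (πhatg πhatb : Fin 2 → ℝ)
    (hhatbPos : ∀ i, 0 < πhatb i) (hhatbSum : πhatb 0 + πhatb 1 = 1)
    (hmin : ∀ πg πb : Fin 2 → ℝ, (∀ i, 0 < πg i) → πg 0 + πg 1 = 1 →
      (∀ i, 0 < πb i) → πb 0 + πb 1 = 1 → L πhatg πhatb ≤ L πg πb) :
    πhatb ≠ qb → πhatg ≠ πstarg := by
  intro hbne hgeq
  obtain ⟨πg, hπgPos, hπgSum, hπg⟩ := exists_qpoMargin_eq hμcont hμ0 hqgPos ustar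
  obtain ⟨πb, hπbPos, hπbSum, hπb⟩ := exists_qpoMargin_eq hμcont hμ0 hqbPos ustar
  have hle : wg * F (qpoMargin μ qg πhatg) + wb * F (qpoMargin μ qb πhatb) ≤
      wg * F ustar + wb * F ustar := by
    have := hmin πg πb hπgPos hπgSum hπbPos hπbSum
    unfold qpoMargin at hπg hπb ⊢
    rwa [hL, hL, hπg, hπb] at this
  obtain ⟨hug, hub⟩ := eq_of_weighted_sum_le_of_unique_min hustarMin hustarUniq hwg hwb hle
  have hustar : ustar = 0 := by
    rw [← hug, hgeq, ← hgood, qpoMargin_self fun i => (hqgPos i).ne']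
  exact hbne (eq_of_qpoMargin_eq_zero hμmono hhatbPos hhatbSum hqbPos hqbSum (hub.trans hustar))

/-- Theorem 1 (QPO preservation impossibility).  On `Y = {y₁, y₂}` (here `Fin 2`), let
`ψ` be quasi-convex, `μ : (0,∞) → ℝ` continuous and strictly increasing with
`μ(t) → −∞` as `t → 0⁺` and `μ(t) → +∞` as `t → ∞`, and let `p ∈ (0,1)` be the common
preference probability at a good prompt and a bad prompt.  Suppose
`F(u) = p ψ(u) + (1−p) ψ(−u)` has a unique global minimizer `u*`.  Let the reference
policy `qg` equal the BT-optimal policy `π*_g` at the good prompt, and `qb ≠ π*_b` at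
the bad prompt.  Then every global minimizer `(π̂g, π̂b)` of the decoupled QPO loss
`L(πg, πb) = wg F(μ(πg y₁ / qg y₁) − μ(πg y₂ / qg y₂)) + wb F(μ(πb y₁ / qb y₁) − μ(πb y₂ / qb y₂))`
over pairs of full-support policies satisfies: if `π̂b ≠ qb` then `π̂g ≠ π*_g`. -/
theorem qpo_preservation_impossibility
    (ψ : ℝ → ℝ) (hψ : QuasiconvexOn ℝ Set.univ ψ)
    (μ : ℝ → ℝ)
    (hμcont : ContinuousOn μ (Set.Ioi 0))
    (hμmono : StrictMonoOn μ (Set.Ioi 0))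
    (hμ0 : Filter.Tendsto μ (nhdsWithin 0 (Set.Ioi 0)) Filter.atBot)
    (hμtop : Filter.Tendsto μ Filter.atTop Filter.atTop)
    (p : ℝ) (hp : p ∈ Set.Ioo (0 : ℝ) 1)
    (F : ℝ → ℝ) (hF : ∀ u, F u = p * ψ u + (1 - p) * ψ (-u))
    (ustar : ℝ) (hustarMin : ∀ u, F ustar ≤ F u)
    (hustarUniq : ∀ u, F u = F ustar → u = ustar)
    (πstarg πstarb qg qb : Fin 2 → ℝ)
    (hgPos : ∀ i, 0 < πstarg i) (hgSum : πstarg 0 + πstarg 1 = 1)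
    (hbPos : ∀ i, 0 < πstarb i) (hbSum : πstarb 0 + πstarb 1 = 1)
    (hqgPos : ∀ i, 0 < qg i) (hqgSum : qg 0 + qg 1 = 1)
    (hqbPos : ∀ i, 0 < qb i) (hqbSum : qb 0 + qb 1 = 1)
    (hgBT : πstarg 0 / (πstarg 0 + πstarg 1) = p)
    (hbBT : πstarb 0 / (πstarb 0 + πstarb 1) = p)
    (hgood : qg = πstarg) (hbad : qb ≠ πstarb)
    (wg wb : ℝ) (hwg : 0 < wg) (hwb : 0 < wb)
    (L : (Fin 2 → ℝ) → (Fin 2 → ℝ) → ℝ)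
    (hL : ∀ πg πb : Fin 2 → ℝ,
      L πg πb = wg * F (μ (πg 0 / qg 0) - μ (πg 1 / qg 1)) +
                wb * F (μ (πb 0 / qb 0) - μ (πb 1 / qb 1)))
    (πhatg πhatb : Fin 2 → ℝ)
    (hhatgPos : ∀ i, 0 < πhatg i) (hhatgSum : πhatg 0 + πhatg 1 = 1)
    (hhatbPos : ∀ i, 0 < πhatb i) (hhatbSum : πhatb 0 + πhatb 1 = 1)
    (hmin : ∀ πg πb : Fin 2 → ℝ, (∀ i, 0 < πg i) → πg 0 + πg 1 = 1 →
      (∀ i, 0 < πb i) → πb 0 + πb 1 = 1 → L πhatg πhatb ≤ L πg πb) :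
    πhatb ≠ qb → πhatg ≠ πstarg :=
  qpo_preservation_impossibility_general μ hμcont hμmono hμ0 F ustar hustarMin hustarUniq πstarg qg
    qb hqgPos hqbPos hqbSum hgood wg wb hwg hwb L hL πhatg πhatb hhatbPos hhatbSum hmin
end
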